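/- arXiv:1904.03974 — 3 statements merged into one kernel-verified Lean document; each statement's English description precedes it below -/
import Mathlib

section
/- Let N ≥ 1. Inside the unitary group U(N) of N×N complex matrices, let S be the union of the set of real orthogonal matrices (unitary matrices all of whose entries have zero imaginary part) and the set of diagonal unitary matrices. Then the topological closure of the subgroup of U(N) generated by S is all of U(N). In other words, U(N) is topologically generated by the orthogonal group O(N) and the diagonal maximal torus 𝕋_N. -/
open Complex Matrix
open scoped ComplexConjugate

variable {N : ℕ}

def planeBlock (i j : Fin N) (α β γ δ : ℂ) : Matrix (Fin N) (Fin N) ℂ :=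
  fun k l =>
    if k = i then (if l = i then α else if l = j then β else 0)
    else if k = j then (if l = i then γ else if l = j then δ else 0)
    else if k = l then 1 else 0

lemma sum_two {i j : Fin N} (hij : i ≠ j) (f g : Fin N → ℂ) :
    (∑ m, (if m = i then f m else if m = j then g m else 0)) = f i + g j := by
  rw [← Finset.sum_subset (Finset.subset_univ ({i, j} : Finset (Fin N)))]
  · rw [Finset.sum_pair hij]
    simp [hij, hij.symm]
  · intro x _ hx
    simp only [Finset.mem_insert, Finset.mem_singleton, not_or] at hx
    simp [hx.1, hx.2]

lemma planeBlock_mul_apply {i j : Fin N} (hij : i ≠ j) (α β γ δ : ℂ)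
    (M : Matrix (Fin N) (Fin N) ℂ) (k l : Fin N) :
    (planeBlock i j α β γ δ * M) k l =
      if k = i then α * M i l + β * M j l
      else if k = j then γ * M i l + δ * M j l
      else M k l := by
  rw [Matrix.mul_apply]
  by_cases hki : k = i
  · rw [if_pos hki]
    have key : ∀ m : Fin N, planeBlock i j α β γ δ k m * M m l =
        (if m = i then α * M i l else if m = j then β * M j l else 0) := by
      intro m
      simp only [planeBlock, if_pos hki]
      by_cases h1 : m = i
      · simp [h1]
      · by_cases h2 : m = j
        · simp [h1, h2, hij.symm]
        · simp [h1, h2]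
    rw [Finset.sum_congr rfl fun m _ => key m, sum_two hij]
  · by_cases hkj : k = j
    · rw [if_neg hki, if_pos hkj]
      have key : ∀ m : Fin N, planeBlock i j α β γ δ k m * M m l =
          (if m = i then γ * M i l else if m = j then δ * M j l else 0) := by
        intro m
        simp only [planeBlock, if_neg hki, if_pos hkj]
        by_cases h1 : m = i
        · simp [h1]
        · by_cases h2 : m = j
          · simp [h1, h2, hij.symm]
          · simp [h1, h2]
      rw [Finset.sum_congr rfl fun m _ => key m, sum_two hij]
    · rw [if_neg hki, if_neg hkj]
      have key : ∀ m : Fin N, planeBlock i j α β γ δ k m * M m l =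
          if m = k then M k l else 0 := by
        intro m
        simp only [planeBlock, if_neg hki, if_neg hkj]
        by_cases h : k = m
        · simp [h]
        · rw [if_neg h, if_neg (fun hh : m = k => h hh.symm), zero_mul]
      rw [Finset.sum_congr rfl fun m _ => key m, Finset.sum_ite_eq' Finset.univ k]
      simp

lemma planeBlock_conjTranspose {i j : Fin N} (hij : i ≠ j) (α β γ δ : ℂ) :
    (planeBlock i j α β γ δ)ᴴ = planeBlock i j (conj α) (conj γ) (conj β) (conj δ) := by
  ext k l
  simp only [Matrix.conjTranspose_apply, planeBlock]
  by_cases h1 : k = i <;> by_cases h2 : l = i <;> by_cases h3 : k = j <;> by_cases h4 : l = j <;>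
    simp_all <;> simp [eq_comm, h1, h2, h3, h4] <;> simp_all [eq_comm]

lemma planeBlock_apply_of_ne {i j : Fin N} (α β γ δ : ℂ) {k l : Fin N}
    (hki : k ≠ i) (hkj : k ≠ j) :
    planeBlock i j α β γ δ k l = if k = l then 1 else 0 := by
  simp [planeBlock, hki, hkj]

lemma planeBlock_mem_unitaryGroup {i j : Fin N} (hij : i ≠ j) (α β γ δ : ℂ)
    (h1 : α * conj α + β * conj β = 1) (h2 : α * conj γ + β * conj δ = 0)
    (h4 : γ * conj γ + δ * conj δ = 1) :
    planeBlock i j α β γ δ ∈ Matrix.unitaryGroup (Fin N) ℂ := by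
  have h3 : γ * conj α + δ * conj β = 0 := by
    have h := congrArg conj h2
    simp only [map_add, RingHom.map_mul, Complex.conj_conj, map_zero] at h
    linear_combination h
  rw [Matrix.mem_unitaryGroup_iff]
  show planeBlock i j α β γ δ * (planeBlock i j α β γ δ)ᴴ = 1
  rw [planeBlock_conjTranspose hij]
  have hji : j ≠ i := hij.symm
  set Q := planeBlock i j (conj α) (conj γ) (conj β) (conj δ) with hQ
  have Qi : ∀ l : Fin N, Q i l = if l = i then conj α else if l = j then conj γ else 0 := by
    intro l; rw [hQ]; show (if i = i then _ else _) = _; rw [if_pos rfl]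
  have Qj : ∀ l : Fin N, Q j l = if l = i then conj β else if l = j then conj δ else 0 := by
    intro l; rw [hQ]; show (if j = i then _ else if j = j then _ else _) = _
    rw [if_neg hji, if_pos rfl]
  ext k l
  rw [planeBlock_mul_apply hij, Matrix.one_apply]
  by_cases hki : k = i
  · rw [if_pos hki, hki, Qi, Qj]
    by_cases hli : l = i
    · rw [if_pos hli, if_pos hli, hli, if_pos rfl]; linear_combination h1
    · rw [if_neg hli, if_neg hli, if_neg (fun h : i = l => hli h.symm)]
      by_cases hlj : l = j
      · rw [if_pos hlj, if_pos hlj]; linear_combination h2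
      · rw [if_neg hlj, if_neg hlj]; ring
  · rw [if_neg hki]
    by_cases hkj : k = j
    · rw [if_pos hkj, hkj, Qi, Qj]
      by_cases hli : l = i
      · rw [if_pos hli, if_pos hli, if_neg (fun h : j = l => hji (h.trans hli))]
        linear_combination h3
      · rw [if_neg hli, if_neg hli]
        by_cases hlj : l = j
        · rw [if_pos hlj, if_pos hlj, hlj, if_pos rfl]; linear_combination h4
        · rw [if_neg hlj, if_neg hlj, if_neg (fun h : j = l => hlj h.symm)]; ring
    · rw [if_neg hkj, hQ, planeBlock_apply_of_ne _ _ _ _ hki hkj]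

/-- The generating set: real orthogonal matrices together with diagonal unitaries. -/
def gens (N : ℕ) : Set (Matrix.unitaryGroup (Fin N) ℂ) :=
  {U : Matrix.unitaryGroup (Fin N) ℂ |
      ∀ i j, ((U : Matrix (Fin N) (Fin N) ℂ) i j).im = 0} ∪
  {U : Matrix.unitaryGroup (Fin N) ℂ |
      ∀ i j, i ≠ j → (U : Matrix (Fin N) (Fin N) ℂ) i j = 0}

/-- Complex sign. -/
noncomputable def csgn (z : ℂ) : ℂ := if z = 0 then 1 else z / ‖z‖

lemma csgn_mul_conj (z : ℂ) : csgn z * conj (csgn z) = 1 := by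
  unfold csgn
  by_cases h : z = 0
  · simp [h]
  · rw [if_neg h]
    have hz : (‖z‖ : ℂ) ≠ 0 := by
      simpa using (norm_ne_zero_iff).2 h
    field_simp
    simp only [map_div₀, Complex.conj_ofReal]
    field_simp
    rw [Complex.mul_conj]
    norm_cast
    rw [← Complex.sq_norm]
lemma csgn_mul_abs (z : ℂ) : csgn z * (‖z‖ : ℂ) = z := by
  unfold csgn
  by_cases h : z = 0
  · simp [h]
  · rw [if_neg h]
    have hz : (‖z‖ : ℂ) ≠ 0 := by
      simpa using (norm_ne_zero_iff).2 h
    field_simp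

lemma conj_csgn_mul_abs (z : ℂ) : conj (csgn z) * (‖z‖ : ℂ) = conj z := by
  have := congrArg conj (csgn_mul_abs z)
  simpa using this

lemma diag_mem_unitaryGroup (f : Fin N → ℂ) (hf : ∀ k, f k * conj (f k) = 1) :
    Matrix.diagonal f ∈ Matrix.unitaryGroup (Fin N) ℂ := by
  rw [Matrix.mem_unitaryGroup_iff]
  show Matrix.diagonal f * (Matrix.diagonal f)ᴴ = 1
  rw [Matrix.diagonal_conjTranspose, Matrix.diagonal_mul_diagonal]
  convert Matrix.diagonal_one with k
  exact hf k

lemma diag_mem_gens (f : Fin N → ℂ) (hu : Matrix.diagonal f ∈ Matrix.unitaryGroup (Fin N) ℂ) :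
    (⟨Matrix.diagonal f, hu⟩ : Matrix.unitaryGroup (Fin N) ℂ) ∈ gens N := by
  right
  intro k l hkl
  exact Matrix.diagonal_apply_ne f hkl

lemma decomp_planeBlock {i j : Fin N} (hij : i ≠ j) (p q x y : ℂ) (c s : ℝ) :
    Matrix.diagonal (fun k => if k = i then p else if k = j then q else 1) *
      planeBlock i j (c : ℂ) (-(s : ℂ)) (s : ℂ) (c : ℂ) *
      Matrix.diagonal (fun k => if k = i then x else if k = j then y else 1) =
    planeBlock i j (p * c * x) (p * (-(s : ℂ)) * y) (q * s * x) (q * c * y) := by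
  have hji : j ≠ i := hij.symm
  ext k l
  rw [Matrix.mul_diagonal, Matrix.diagonal_mul]
  by_cases hki : k = i <;> by_cases hkj : k = j <;> by_cases hli : l = i <;>
      by_cases hlj : l = j <;>
    simp only [planeBlock, hki, hkj, hli, hlj, if_true, if_false, hij, hji, ite_true,
      ite_false, if_pos rfl, if_neg hij, if_neg hji, eq_self_iff_true] <;>
    first
      | (exact absurd (hki ▸ hkj : (i:Fin N) = j) hij)
      | (exact absurd (hki.symm.trans hkj) hij)
      | (exact absurd (hli.symm.trans hlj) hij)
      | ring
      | (simp [hki, hkj, hli, hlj]; ring_nf; try simp [Ne.symm hki, Ne.symm hkj])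

lemma specialBlock_mem {i j : Fin N} (hij : i ≠ j) (a b d : ℂ)
    (hab : a * conj a + b * conj b = 1) (hd : d * conj d = 1) :
    ∃ hu : planeBlock i j a b (-(conj b) * d) (conj a * d) ∈ Matrix.unitaryGroup (Fin N) ℂ,
      (⟨_, hu⟩ : Matrix.unitaryGroup (Fin N) ℂ) ∈ Subgroup.closure (gens N) := by
  set c : ℝ := ‖a‖ with hc
  set s : ℝ := ‖b‖ with hs
  have hcs : (c : ℂ) * c + (s : ℂ) * s = 1 := by
    have h := hab
    rw [Complex.mul_conj, Complex.mul_conj] at h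
    rw [hc, hs]
    have h1 : (‖a‖ : ℂ) * (‖a‖ : ℂ) = (Complex.normSq a : ℂ) := by
      norm_cast
      rw [← Complex.sq_norm]; ring
    have h2 : (‖b‖ : ℂ) * (‖b‖ : ℂ) = (Complex.normSq b : ℂ) := by
      norm_cast
      rw [← Complex.sq_norm]; ring
    rw [h1, h2]
    exact_mod_cast h
  set p : ℂ := csgn a with hp
  set q : ℂ := -(conj (csgn b)) * d with hq
  set y : ℂ := -(csgn b) * conj (csgn a) with hy
  -- the rotation
  have hRu : planeBlock i j (c : ℂ) (-(s : ℂ)) (s : ℂ) (c : ℂ) ∈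
      Matrix.unitaryGroup (Fin N) ℂ := by
    apply planeBlock_mem_unitaryGroup hij
    · simp only [map_neg, Complex.conj_ofReal]; linear_combination hcs
    · simp only [map_neg, Complex.conj_ofReal]; ring
    · simp only [map_neg, Complex.conj_ofReal]; linear_combination hcs
  have hRgens : (⟨_, hRu⟩ : Matrix.unitaryGroup (Fin N) ℂ) ∈ gens N := by
    left
    intro k l
    show (planeBlock i j (c : ℂ) (-(s : ℂ)) (s : ℂ) (c : ℂ) k l).im = 0
    unfold planeBlock
    split_ifs <;> simp
  -- the diagonals
  have hfu : Matrix.diagonal (fun k => if k = i then p else if k = j then q else 1) ∈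
      Matrix.unitaryGroup (Fin N) ℂ := by
    apply diag_mem_unitaryGroup
    intro k
    by_cases hki : k = i
    · simp only [if_pos hki, hp]; exact csgn_mul_conj a
    · by_cases hkj : k = j
      · simp only [if_neg hki, if_pos hkj, hq, _root_.map_mul, map_neg, Complex.conj_conj]
        linear_combination (d * conj d) * csgn_mul_conj b + hd
      · simp [hki, hkj]
  have hgu : Matrix.diagonal (fun k => if k = i then 1 else if k = j then y else 1) ∈
      Matrix.unitaryGroup (Fin N) ℂ := by
    apply diag_mem_unitaryGroup
    intro k
    by_cases hki : k = i
    · simp [hki]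
    · by_cases hkj : k = j
      · simp only [if_neg hki, if_pos hkj, hy, _root_.map_mul, map_neg, Complex.conj_conj]
        linear_combination (conj (csgn a) * csgn a) * csgn_mul_conj b + csgn_mul_conj a
      · simp [hki, hkj]
  -- the decomposition
  have eA : p * (c : ℂ) * 1 = a := by
    rw [mul_one, hp, hc]; exact csgn_mul_abs a
  have eB : p * (-(s : ℂ)) * y = b := by
    rw [hp, hy, hs]
    linear_combination (csgn b * (‖b‖ : ℂ)) * csgn_mul_conj a + csgn_mul_abs b
  have eC : q * (s : ℂ) * 1 = -(conj b) * d := by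
    rw [mul_one, hq, hs]
    linear_combination (-d) * conj_csgn_mul_abs b
  have eD : q * (c : ℂ) * y = conj a * d := by
    rw [hq, hy, hc]
    linear_combination (d * (conj (csgn a) * (‖a‖ : ℂ))) * csgn_mul_conj b +
      d * conj_csgn_mul_abs a
  have heq : Matrix.diagonal (fun k => if k = i then p else if k = j then q else 1) *
      planeBlock i j (c : ℂ) (-(s : ℂ)) (s : ℂ) (c : ℂ) *
      Matrix.diagonal (fun k => if k = i then 1 else if k = j then y else 1) =
      planeBlock i j a b (-(conj b) * d) (conj a * d) := by
    rw [decomp_planeBlock hij, eA, eB, eC, eD]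
  have hu : planeBlock i j a b (-(conj b) * d) (conj a * d) ∈
      Matrix.unitaryGroup (Fin N) ℂ := by
    rw [← heq]
    exact mul_mem (mul_mem hfu hRu) hgu
  refine ⟨hu, ?_⟩
  have hprod : (⟨_, hu⟩ : Matrix.unitaryGroup (Fin N) ℂ) =
      ⟨_, hfu⟩ * ⟨_, hRu⟩ * ⟨_, hgu⟩ := by
    apply Subtype.ext
    push_cast
    exact heq.symm
  rw [hprod]
  exact mul_mem (mul_mem (Subgroup.subset_closure (diag_mem_gens _ hfu))
    (Subgroup.subset_closure hRgens)) (Subgroup.subset_closure (diag_mem_gens _ hgu))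

lemma col_zero_above {U : Matrix (Fin N) (Fin N) ℂ} (hU : U ∈ Matrix.unitaryGroup (Fin N) ℂ)
    {k : ℕ} {kF : Fin N} (hkF : k ≤ (kF : ℕ))
    (hcols : ∀ m l : Fin N, (l : ℕ) < k → U m l = if m = l then 1 else 0) :
    ∀ l : Fin N, (l : ℕ) < k → U l kF = 0 := by
  intro l hl
  have h := Matrix.mem_unitaryGroup_iff'.1 hU
  have h2 := congrFun (congrFun h l) kF
  rw [Matrix.mul_apply] at h2
  have hsum : (∑ m, (star U) l m * U m kF) = U l kF := by
    rw [Finset.sum_eq_single l]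
    · have : (star U) l l = star (U l l) := rfl
      rw [this, hcols l l hl, if_pos rfl]
      simp
    · intro m _ hm
      have : (star U) l m = star (U m l) := rfl
      rw [this, hcols m l hl, if_neg hm]
      simp
    · intro hmem; exact absurd (Finset.mem_univ l) hmem
  rw [hsum] at h2
  rw [h2, Matrix.one_apply_ne (fun hh : l = kF => by omega)]

lemma diag_entry_norm {U : Matrix (Fin N) (Fin N) ℂ} (hU : U ∈ Matrix.unitaryGroup (Fin N) ℂ)
    {kF : Fin N} (hz : ∀ m : Fin N, m ≠ kF → U m kF = 0) :
    star (U kF kF) * U kF kF = 1 := by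
  have h := Matrix.mem_unitaryGroup_iff'.1 hU
  have h2 := congrFun (congrFun h kF) kF
  rw [Matrix.mul_apply] at h2
  have hsum : (∑ m, (star U) kF m * U m kF) = star (U kF kF) * U kF kF := by
    rw [Finset.sum_eq_single kF]
    · rfl
    · intro m _ hm
      rw [hz m hm, mul_zero]
    · intro hmem; exact absurd (Finset.mem_univ kF) hmem
  rw [hsum] at h2
  rw [h2, Matrix.one_apply_eq]

lemma key (N : ℕ) : ∀ (e k : ℕ), k + e = N → ∀ U : Matrix.unitaryGroup (Fin N) ℂ,
    (∀ m l : Fin N, (l : ℕ) < k →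
      (U : Matrix (Fin N) (Fin N) ℂ) m l = if m = l then 1 else 0) →
    U ∈ Subgroup.closure (gens N) := by
  intro e
  induction e with
  | zero =>
    intro k hk U hcols
    have hU1 : U = 1 := by
      apply Subtype.ext
      ext m l
      rw [hcols m l (by omega)]
      have h1 : ((1 : Matrix.unitaryGroup (Fin N) ℂ) : Matrix (Fin N) (Fin N) ℂ) = 1 := rfl
      rw [h1, Matrix.one_apply]
    rw [hU1]
    exact one_mem _
  | succ e IH =>
    intro k hk U hcols
    have hkN : k < N := by omega
    set kF : Fin N := ⟨k, hkN⟩ with hkFdef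
    have hkFval : (kF : ℕ) = k := rfl
    suffices inner : ∀ (d : ℕ) (V : Matrix.unitaryGroup (Fin N) ℂ),
        (∀ m l : Fin N, (l : ℕ) < k →
          (V : Matrix (Fin N) (Fin N) ℂ) m l = if m = l then 1 else 0) →
        (∀ m : Fin N, k + d < (m : ℕ) → (V : Matrix (Fin N) (Fin N) ℂ) m kF = 0) →
        V ∈ Subgroup.closure (gens N) by
      apply inner N U hcols
      intro m hm
      exact absurd m.isLt (by omega)
    intro d
    induction d with
    | zero =>
      intro V hVcols hVcol
      have hbelow : ∀ l : Fin N, (l : ℕ) < k → (V : Matrix (Fin N) (Fin N) ℂ) l kF = 0 :=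
        col_zero_above V.2 (le_of_eq hkFval.symm) hVcols
      have hne : ∀ m : Fin N, m ≠ kF → (V : Matrix (Fin N) (Fin N) ℂ) m kF = 0 := by
        intro m hm
        rcases lt_trichotomy (m : ℕ) k with h | h | h
        · exact hbelow m h
        · exact absurd (Fin.ext (h.trans hkFval.symm)) hm
        · exact hVcol m (by omega)
      set z := (V : Matrix (Fin N) (Fin N) ℂ) kF kF with hzdef
      have hz1 : star z * z = 1 := diag_entry_norm V.2 hne
      set f : Fin N → ℂ := fun l => if l = kF then star z else 1 with hfdef
      have hDu : Matrix.diagonal f ∈ Matrix.unitaryGroup (Fin N) ℂ := by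
        apply diag_mem_unitaryGroup
        intro m
        by_cases hm : m = kF
        · simp only [hfdef, if_pos hm]
          calc star z * conj (star z) = star z * z := by simp
          _ = 1 := hz1
        · simp [hfdef, hm]
      set Dg : Matrix.unitaryGroup (Fin N) ℂ := ⟨Matrix.diagonal f, hDu⟩ with hDgdef
      have hDH : Dg ∈ Subgroup.closure (gens N) :=
        Subgroup.subset_closure (diag_mem_gens f hDu)
      have hcoe : ((V * Dg : Matrix.unitaryGroup (Fin N) ℂ) : Matrix (Fin N) (Fin N) ℂ) =
          (V : Matrix (Fin N) (Fin N) ℂ) * Matrix.diagonal f := rfl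
      have hcols' : ∀ m l : Fin N, (l : ℕ) < k + 1 →
          ((V * Dg : Matrix.unitaryGroup (Fin N) ℂ) : Matrix (Fin N) (Fin N) ℂ) m l =
            if m = l then 1 else 0 := by
        intro m l hl
        rw [hcoe, Matrix.mul_diagonal]
        by_cases hlk : (l : ℕ) < k
        · rw [hVcols m l hlk]
          have : f l = 1 := by
            rw [hfdef]
            exact if_neg (fun h : l = kF => by omega)
          rw [this, mul_one]
        · have hlkF : l = kF := Fin.ext (by omega)
          by_cases hm : m = kF
          · rw [hlkF, hm, if_pos rfl]
            have hf : f kF = star z := by simp [hfdef]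
            rw [hf, ← hzdef, mul_comm]
            exact hz1
          · rw [hlkF, hne m hm, zero_mul, if_neg (fun h : m = kF => hm h)]
      have hVD : (V * Dg : Matrix.unitaryGroup (Fin N) ℂ) ∈ Subgroup.closure (gens N) :=
        IH (k + 1) (by omega) (V * Dg) hcols'
      have : V = V * Dg * Dg⁻¹ := by group
      rw [this]
      exact mul_mem hVD (inv_mem hDH)
    | succ d IHd =>
      intro V hVcols hVcol
      by_cases hm0 : k + d + 1 < N
      · set m₀ : Fin N := ⟨k + d + 1, hm0⟩ with hm0def
        by_cases hb : (V : Matrix (Fin N) (Fin N) ℂ) m₀ kF = 0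
        · apply IHd V hVcols
          intro m hm
          by_cases hmm : (m : ℕ) = k + d + 1
          · rw [show m = m₀ from Fin.ext hmm]
            exact hb
          · exact hVcol m (by omega)
        · have hkm : kF ≠ m₀ := by
            intro h
            have h2 : (kF : ℕ) = (m₀ : ℕ) := congrArg Fin.val h
            rw [hkFval] at h2
            simp only [hm0def] at h2
            omega
          set a' := (V : Matrix (Fin N) (Fin N) ℂ) kF kF with ha'
          set b' := (V : Matrix (Fin N) (Fin N) ℂ) m₀ kF with hb'
          set r2 : ℝ := Complex.normSq a' + Complex.normSq b' with hr2def
          have hr2pos : 0 < r2 := by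
            have h1 : 0 ≤ Complex.normSq a' := Complex.normSq_nonneg _
            have h2 : 0 < Complex.normSq b' := Complex.normSq_pos.2 hb
            linarith
          set r : ℝ := Real.sqrt r2 with hrdef
          have hrpos : 0 < r := Real.sqrt_pos.2 hr2pos
          have hrC : ((r : ℝ) : ℂ) ≠ 0 := by exact_mod_cast ne_of_gt hrpos
          have hrr : (r : ℂ) * (r : ℂ) = (r2 : ℂ) := by
            norm_cast
            exact Real.mul_self_sqrt hr2pos.le
          set a : ℂ := conj a' / r with hadef
          set b : ℂ := conj b' / r with hbdef
          have hca : conj a = a' / r := by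
            rw [hadef, map_div₀, Complex.conj_conj, Complex.conj_ofReal]
          have hcb : conj b = b' / r := by
            rw [hbdef, map_div₀, Complex.conj_conj, Complex.conj_ofReal]
          have hab : a * conj a + b * conj b = 1 := by
            have e1 : a * conj a + b * conj b =
                ((Complex.normSq a' : ℂ) + (Complex.normSq b' : ℂ)) / ((r : ℂ) * (r : ℂ)) := by
              rw [hadef, hbdef, hca, hcb, div_mul_div_comm, div_mul_div_comm, ← add_div]
              congr 1
              rw [mul_comm (conj a') a', mul_comm (conj b') b', Complex.mul_conj,
                Complex.mul_conj]
            have e2 : ((r2 : ℝ) : ℂ) = (Complex.normSq a' : ℂ) + (Complex.normSq b' : ℂ) := by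
              rw [hr2def]; push_cast; ring
            rw [e1, hrr, e2]
            exact div_self (by rw [← e2]; exact_mod_cast hr2pos.ne')
          obtain ⟨hGu, hGH⟩ := specialBlock_mem hkm a b 1 hab (by simp)
          set Gg : Matrix.unitaryGroup (Fin N) ℂ :=
            ⟨planeBlock kF m₀ a b (-(conj b) * 1) (conj a * 1), hGu⟩ with hGgdef
          have hcoe : ((Gg * V : Matrix.unitaryGroup (Fin N) ℂ) : Matrix (Fin N) (Fin N) ℂ) =
              planeBlock kF m₀ a b (-(conj b) * 1) (conj a * 1) *
                (V : Matrix (Fin N) (Fin N) ℂ) := rfl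
          have hkFl : ∀ l : Fin N, (l : ℕ) < k → kF ≠ l := by
            intro l hl h
            have := congrArg Fin.val h
            rw [hkFval] at this
            omega
          have hm0l : ∀ l : Fin N, (l : ℕ) < k → m₀ ≠ l := by
            intro l hl h
            have := congrArg Fin.val h
            simp only [hm0def] at this
            omega
          have hcols' : ∀ m l : Fin N, (l : ℕ) < k →
              ((Gg * V : Matrix.unitaryGroup (Fin N) ℂ) : Matrix (Fin N) (Fin N) ℂ) m l =
                if m = l then 1 else 0 := by
            intro m l hl
            rw [hcoe, planeBlock_mul_apply hkm]
            by_cases hmk : m = kF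
            · rw [if_pos hmk, hVcols kF l hl, hVcols m₀ l hl, if_neg (hkFl l hl),
                if_neg (hm0l l hl), if_neg (hmk ▸ hkFl l hl)]
              ring
            · rw [if_neg hmk]
              by_cases hmm : m = m₀
              · rw [if_pos hmm, hVcols kF l hl, hVcols m₀ l hl, if_neg (hkFl l hl),
                  if_neg (hm0l l hl), if_neg (hmm ▸ hm0l l hl)]
                ring
              · rw [if_neg hmm]
                exact hVcols m l hl
          have hcol' : ∀ m : Fin N, k + d < (m : ℕ) →
              ((Gg * V : Matrix.unitaryGroup (Fin N) ℂ) : Matrix (Fin N) (Fin N) ℂ) m kF = 0 := by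
            intro m hm
            rw [hcoe, planeBlock_mul_apply hkm]
            have hmkF : m ≠ kF := by
              intro h
              have := congrArg Fin.val h
              rw [hkFval] at this
              omega
            rw [if_neg hmkF]
            by_cases hmm : m = m₀
            · rw [if_pos hmm, ← ha', ← hb', hca, hcb]
              field_simp
              ring
            · rw [if_neg hmm]
              have hv : (m : ℕ) ≠ k + d + 1 := by
                intro h
                exact hmm (Fin.ext (by simp only [hm0def]; omega))
              exact hVcol m (by omega)
          have hU' := IHd (Gg * V) hcols' hcol'
          have hVeq : V = Gg⁻¹ * (Gg * V) := by group
          rw [hVeq]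
          exact mul_mem (inv_mem hGH) hU'

      · apply IHd V hVcols
        intro m hm
        exact absurd m.isLt (by omega)

/-- For every `N ≥ 1`, the unitary group `U(N)` is topologically generated by the
orthogonal group `O(N)` (unitary matrices with real entries) together with the
diagonal maximal torus `𝕋_N` (diagonal unitary matrices): the topological closure of
the subgroup generated by their union is all of `U(N)`. -/
theorem unitaryGroup_topologically_generated_by_orthogonal_and_torus
    (N : ℕ) (hN : 1 ≤ N) :
    closure ((Subgroup.closure
        ({U : Matrix.unitaryGroup (Fin N) ℂ |
            ∀ i j, ((U : Matrix (Fin N) (Fin N) ℂ) i j).im = 0} ∪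
         {U : Matrix.unitaryGroup (Fin N) ℂ |
            ∀ i j, i ≠ j → (U : Matrix (Fin N) (Fin N) ℂ) i j = 0}) :
        Subgroup (Matrix.unitaryGroup (Fin N) ℂ)) : Set (Matrix.unitaryGroup (Fin N) ℂ)) =
      Set.univ := by
  have hall : ∀ U : Matrix.unitaryGroup (Fin N) ℂ, U ∈ Subgroup.closure (gens N) := by
    intro U
    exact key N N 0 (by omega) U (fun m l hl => absurd hl (by omega))
  have hset : ((Subgroup.closure (gens N) :
      Subgroup (Matrix.unitaryGroup (Fin N) ℂ)) : Set (Matrix.unitaryGroup (Fin N) ℂ)) =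
      Set.univ := Set.eq_univ_of_forall hall
  show closure ((Subgroup.closure (gens N) :
      Subgroup (Matrix.unitaryGroup (Fin N) ℂ)) : Set (Matrix.unitaryGroup (Fin N) ℂ)) = Set.univ
  rw [hset, closure_univ]
end

section
/- Let Γ be a residually finite group. Then there exist an index set I, a function d : I → ℕ, and an injective ℂ-algebra homomorphism f from the group algebra ℂ[Γ] to the direct product ∏_{i ∈ I} M_{d(i)}(ℂ) of complex matrix algebras, which moreover respects the star operations: f(x*) = f(x)* for all x ∈ ℂ[Γ]. -/
noncomputable def groupAlgebraStar (Γ : Type) [Group Γ]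
    (x : MonoidAlgebra ℂ Γ) : MonoidAlgebra ℂ Γ :=
  MonoidAlgebra.ofCoeff (Finsupp.mapDomain (fun g => g⁻¹)
    (Finsupp.mapRange (starRingEnd ℂ) (map_zero _) x.coeff))

section Aux

variable (Q : Type) [Group Q] [Fintype Q] [DecidableEq Q]

/-- The left regular representation of a finite group as a monoid hom into matrices. -/
noncomputable def regRep : Q →* Matrix Q Q ℂ where
  toFun g := Matrix.of fun a b => if a = g * b then 1 else 0
  map_one' := by
    refine Matrix.ext fun a b => ?_
    simp only [Matrix.of_apply, one_mul, Matrix.one_apply]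
  map_mul' g h := by
    refine Matrix.ext fun a b => ?_
    simp only [Matrix.mul_apply, Matrix.of_apply]
    have key : ∀ c : Q, (if a = g * c then (1:ℂ) else 0) * (if c = h * b then 1 else 0)
        = if c = h * b then (if a = g * c then (1:ℂ) else 0) else 0 := by
      intro c; by_cases hc : c = h * b <;> simp [hc]
    rw [Finset.sum_congr rfl fun c _ => key c, Finset.sum_ite_eq' Finset.univ (h * b)]
    simp [mul_assoc]

lemma regRep_star (g : Q) : star (regRep Q g) = regRep Q g⁻¹ := by
  refine Matrix.ext fun a b => ?_
  have hiff : b = g * a ↔ a = g⁻¹ * b :=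
    ⟨fun h => by rw [h]; group, fun h => by rw [h]; group⟩
  simp only [Matrix.star_apply, regRep, MonoidHom.coe_mk, OneHom.coe_mk, Matrix.of_apply]
  by_cases h : b = g * a
  · rw [if_pos h, if_pos (hiff.mp h)]; simp
  · rw [if_neg h, if_neg (mt hiff.mpr h)]; simp

lemma lift_regRep_apply (y : MonoidAlgebra ℂ Q) (a : Q) :
    (MonoidAlgebra.lift ℂ (Matrix Q Q ℂ) Q (regRep Q)) y a 1 = y.coeff a := by
  rw [MonoidAlgebra.lift_apply]
  have key : ∀ (h : Q) (c : ℂ), ((c • regRep Q h : Matrix Q Q ℂ) a 1) = if a = h then c else 0 := by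
    intro h c
    simp only [Matrix.smul_apply, regRep, MonoidHom.coe_mk, OneHom.coe_mk, Matrix.of_apply,
      mul_one, smul_eq_mul]
    by_cases hh : a = h <;> simp [hh]
  calc (y.coeff.sum fun h c => c • regRep Q h) a 1
      = y.coeff.sum (fun h c => (c • regRep Q h : Matrix Q Q ℂ) a 1) := by
        rw [Finsupp.sum, Finsupp.sum, Matrix.sum_apply]
    _ = y.coeff.sum fun h c => if a = h then c else 0 :=
        Finsupp.sum_congr fun h _ => key h (y.coeff h)
    _ = y.coeff a := by
        rw [Finsupp.sum, Finset.sum_ite_eq y.coeff.support a fun h => y.coeff h]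
        split
        · rfl
        · next hmem => simp [Finsupp.notMem_support_iff.mp hmem]

end Aux

/-- If `Γ` is a residually finite group, then there exist an index set `I`, a function
`d : I → ℕ` and an injective `ℂ`-algebra homomorphism `f` from the group algebra
`ℂ[Γ]` to the product `∏ i, M_{d i}(ℂ)` of matrix algebras which moreover respects the
star operations (`star` on matrices being the conjugate transpose, taken
componentwise on the product). -/
theorem groupAlgebra_embeds_in_prod_matrix_of_residually_finite
    (Γ : Type) [Group Γ]
    (hres : ∀ g : Γ, g ≠ 1 →
      ∃ (Q : Type) (_ : Group Q) (_ : Finite Q) (φ : Γ →* Q), φ g ≠ 1) :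
    ∃ (I : Type) (d : I → ℕ)
      (f : MonoidAlgebra ℂ Γ →ₐ[ℂ] ∀ i : I, Matrix (Fin (d i)) (Fin (d i)) ℂ),
      Function.Injective f ∧ ∀ x, f (groupAlgebraStar Γ x) = star (f x) := by
  classical
  have hres' : ∀ g : Γ, ∃ (Q : Type) (_ : Group Q) (_ : Finite Q) (φ : Γ →* Q),
      g ≠ 1 → φ g ≠ 1 := by
    intro g
    by_cases h : g = 1
    · exact ⟨PUnit, inferInstance, inferInstance, 1, fun hg => absurd h hg⟩
    · obtain ⟨Q, _, _, φ, hφ⟩ := hres g h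
      exact ⟨Q, inferInstance, inferInstance, φ, fun _ => hφ⟩
  choose Q iG iF φ hφ using hres'
  letI : ∀ g, Group (Q g) := iG
  letI : ∀ g, Finite (Q g) := iF
  -- the product finite group associated to a finite subset of Γ
  let QF : Finset Γ → Type := fun F =>
    ∀ _p : {g : Γ // g ∈ F} × {g : Γ // g ∈ F}, Q (_p.1.1 * _p.2.1⁻¹)
  haveI hfin : ∀ F, Fintype (QF F) := fun F => Fintype.ofFinite _
  haveI : ∀ F, DecidableEq (QF F) := fun F => Classical.decEq _
  let ψ : ∀ F : Finset Γ, Γ →* QF F := fun F =>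
    Pi.monoidHom fun p => φ (p.1.1 * p.2.1⁻¹)
  let d : Finset Γ → ℕ := fun F => Fintype.card (QF F)
  let e : ∀ F, QF F ≃ Fin (d F) := fun F => Fintype.equivFin _
  let Φ : ∀ F : Finset Γ, MonoidAlgebra ℂ Γ →ₐ[ℂ] Matrix (Fin (d F)) (Fin (d F)) ℂ := fun F =>
    ((Matrix.reindexAlgEquiv ℂ ℂ (e F)).toAlgHom).comp
      (((MonoidAlgebra.lift ℂ (Matrix (QF F) (QF F) ℂ) (QF F)) (regRep (QF F))).comp
        (MonoidAlgebra.mapDomainAlgHom ℂ ℂ (ψ F)))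
  refine ⟨Finset Γ, d, Pi.algHom _ _ Φ, ?_, ?_⟩
  · rw [injective_iff_map_eq_zero]
    intro x hx
    by_contra hx0
    have hF : Φ x.coeff.support x = 0 := congrFun hx x.coeff.support
    set F := x.coeff.support with hFdef
    -- remove the reindex equivalence
    have h1 : (MonoidAlgebra.lift ℂ (Matrix (QF F) (QF F) ℂ) (QF F)) (regRep (QF F))
        (MonoidAlgebra.mapDomain (ψ F) x) = 0 := by
      have h2 := congrArg (Matrix.reindexAlgEquiv ℂ ℂ (e F)).symm hF
      simpa [Φ, MonoidAlgebra.mapDomainAlgHom] using h2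
    have h2 : MonoidAlgebra.mapDomain (ψ F) x = 0 := by
      ext a
      have h3 := congrFun (congrFun h1 a) 1
      rw [lift_regRep_apply] at h3
      simpa using h3
    obtain ⟨g, hg⟩ := Finsupp.support_nonempty_iff.mpr (fun h => hx0 (MonoidAlgebra.coeff_eq_zero.mp h))
    have hinj : Set.InjOn (ψ F) (F : Set Γ) := by
      intro a ha b hb hab
      by_contra hne
      have hab1 : a * b⁻¹ ≠ 1 := fun h => hne (mul_inv_eq_one.mp h)
      have h4 : φ (a * b⁻¹) a = φ (a * b⁻¹) b := by
        have h4' := congrFun hab (⟨a, ha⟩, ⟨b, hb⟩)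
        exact h4'
      have h5 : φ (a * b⁻¹) (a * b⁻¹) = 1 := by
        rw [map_mul, map_inv, h4, mul_inv_cancel]
      exact hφ _ hab1 h5
    have h6 : x.coeff g = 0 := by
      have h7 := Finsupp.mapDomain_apply' (F : Set Γ) x.coeff (by simp [hFdef]) hinj
        (a := g) (by exact_mod_cast hg)
      rw [show Finsupp.mapDomain (ψ F) x.coeff = 0 from congrArg MonoidAlgebra.coeff h2] at h7
      simpa using h7.symm
    exact Finsupp.mem_support_iff.mp hg h6
  · intro x
    funext F
    show Φ F (groupAlgebraStar Γ x) = star (Φ F x)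
    have hstar_add : ∀ y z : MonoidAlgebra ℂ Γ,
        groupAlgebraStar Γ (y + z) = groupAlgebraStar Γ y + groupAlgebraStar Γ z := by
      intro y z
      unfold groupAlgebraStar
      rw [MonoidAlgebra.coeff_add, Finsupp.mapRange_add (map_add _), Finsupp.mapDomain_add,
        MonoidAlgebra.ofCoeff_add]
    induction x using MonoidAlgebra.induction_linear with
    | zero => simp [groupAlgebraStar]
    | add y z hy hz =>
      rw [hstar_add, map_add, hy, hz, map_add, star_add]
    | single g a =>
      have hgs : groupAlgebraStar Γ (MonoidAlgebra.single g a)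
          = MonoidAlgebra.single g⁻¹ ((starRingEnd ℂ) a) := by
        unfold groupAlgebraStar
        rw [MonoidAlgebra.coeff_single, Finsupp.mapRange_single, Finsupp.mapDomain_single,
          MonoidAlgebra.ofCoeff_single]
      have hΦ : ∀ (h : Γ) (c : ℂ), Φ F (MonoidAlgebra.single h c)
          = c • (Matrix.reindexAlgEquiv ℂ ℂ (e F)) (regRep (QF F) (ψ F h)) := by
        intro h c
        show (Matrix.reindexAlgEquiv ℂ ℂ (e F))
          ((MonoidAlgebra.lift ℂ (Matrix (QF F) (QF F) ℂ) (QF F)) (regRep (QF F))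
            (MonoidAlgebra.mapDomain (ψ F) (MonoidAlgebra.single h c))) = _
        rw [MonoidAlgebra.mapDomain_single]
        rw [MonoidAlgebra.lift_single, map_smul]
      rw [hgs, hΦ, hΦ]
      rw [star_smul]
      rw [show (starRingEnd ℂ) a = star a from rfl]
      congr 1
      rw [map_inv, ← regRep_star]
      refine Matrix.ext fun i j => ?_
      simp [Matrix.reindexAlgEquiv_apply, Matrix.reindex_apply, Matrix.star_apply,
        Matrix.submatrix_apply]
end

section
/- Let k ≥ 0 and let G₁, …, G_k be finite groups. Then the free product G₁ * G₂ * ⋯ * G_k is a residually finite group: for every element g ≠ 1 of the free product there exist a finite group Q and a group homomorphism φ from the free product to Q with φ(g) ≠ 1. -/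
namespace CoprodIRF

open Monoid Monoid.CoprodI Monoid.CoprodI.Word

variable {ι : Type} [DecidableEq ι] {G : ι → Type} [∀ i, Group (G i)]
  [∀ i, DecidableEq (G i)]

/-- The invariant set for the action of `G i`: words of length at most `n + 1`,
bounded by `n` if the first letter is not from `G i`. -/
def S (n : ℕ) (i : ι) : Set (Word G) :=
  {w | w.toList.length ≤ n + 1 ∧ (w.fstIdx ≠ some i → w.toList.length ≤ n)}

theorem smul_of_fstIdx_ne {i : ι} (m : G i) {w : Word G} (h : w.fstIdx ≠ some i) :
    of m • w = rcons ⟨m, w, h⟩ := by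
  rw [of_smul_def, equivPair_eq_of_fstIdx_ne h]
  simp

set_option linter.unusedSectionVars false in
theorem length_cons {i : ι} (m : G i) (w : Word G) (h1 h2) :
    (cons m w h1 h2).toList.length = w.toList.length + 1 := by
  simp [cons]

theorem smul_mem_S {n : ℕ} {i : ι} (m : G i) {w : Word G} (hw : w ∈ S n i) :
    of m • w ∈ S n i := by
  induction w using consRecOn with
  | empty =>
    rw [smul_of_fstIdx_ne m (by simp [fstIdx])]
    rw [rcons]
    split_ifs with hm
    · exact hw
    · refine ⟨?_, fun hne => absurd (fstIdx_cons _ _ _ _) hne⟩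
      simpa [length_cons] using Nat.succ_le_succ (hw.2 (by simp [fstIdx]))
  | cons j m' w' h1 h2 _ =>
    by_cases hij : i = j
    · subst hij
      have hw1 : w'.toList.length ≤ n := by
        have := hw.1; rw [length_cons] at this; omega
      rw [cons_eq_smul, smul_smul, ← MonoidHom.map_mul, smul_of_fstIdx_ne (m * m') h1, rcons]
      split_ifs with hm
      · exact ⟨Nat.le_succ_of_le hw1, fun _ => hw1⟩
      · refine ⟨?_, fun hne => absurd (fstIdx_cons _ _ _ _) hne⟩
        simpa [length_cons] using Nat.succ_le_succ hw1
    · have hfst : (cons m' w' h1 h2).fstIdx ≠ some i := by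
        rw [fstIdx_cons]
        simp [Ne.symm hij]
      have hlen : (cons m' w' h1 h2).toList.length ≤ n := hw.2 hfst
      rw [smul_of_fstIdx_ne m hfst, rcons]
      split_ifs with hm
      · exact hw
      · refine ⟨?_, fun hne => absurd (fstIdx_cons _ _ _ _) hne⟩
        simpa [length_cons] using Nat.succ_le_succ hlen

/-- Words of length at most `n + 1`. -/
def T (n : ℕ) : Type := {w : Word G // w.toList.length ≤ n + 1}

/-- The action of `m : G i` on bounded-length words: act on `S n i`, identity elsewhere. -/
noncomputable def e (n : ℕ) (i : ι) (m : G i) (t : T (G := G) n) : T (G := G) n :=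
  haveI := Classical.dec (t.1 ∈ S n i)
  if h : t.1 ∈ S n i then ⟨of m • t.1, (smul_mem_S m h).1⟩ else t

theorem e_apply_of_mem {n : ℕ} {i : ι} (m : G i) {t : T (G := G) n} (h : t.1 ∈ S n i) :
    e n i m t = ⟨of m • t.1, (smul_mem_S m h).1⟩ := by
  rw [e]; exact dif_pos h

theorem e_apply_of_not_mem {n : ℕ} {i : ι} (m : G i) {t : T (G := G) n} (h : t.1 ∉ S n i) :
    e n i m t = t := by
  rw [e]; exact dif_neg h

theorem e_one (n : ℕ) (i : ι) (t : T (G := G) n) : e n i 1 t = t := by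
  by_cases h : t.1 ∈ S n i
  · rw [e_apply_of_mem 1 h]
    exact Subtype.ext (by simp)
  · exact e_apply_of_not_mem 1 h

theorem e_mul (n : ℕ) (i : ι) (m m' : G i) (t : T (G := G) n) :
    e n i m (e n i m' t) = e n i (m * m') t := by
  by_cases h : t.1 ∈ S n i
  · have h1 := e_apply_of_mem (n := n) m' h
    have h' : (e (G := G) n i m' t).1 ∈ S n i := by
      rw [h1]; exact smul_mem_S m' h
    rw [e_apply_of_mem m h', e_apply_of_mem (m * m') h]
    refine Subtype.ext ?_
    show of m • (e n i m' t).1 = of (m * m') • t.1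
    rw [h1]
    show of m • (of m' • t.1) = of (m * m') • t.1
    rw [MonoidHom.map_mul, mul_smul]
  · rw [e_apply_of_not_mem m' h, e_apply_of_not_mem (m * m') h, e_apply_of_not_mem m h]

/-- The homomorphism from `G i` to permutations of bounded-length words. -/
noncomputable def permHom (n : ℕ) (i : ι) : G i →* Equiv.Perm (T (G := G) n) where
  toFun m :=
    { toFun := e n i m
      invFun := e n i m⁻¹
      left_inv := fun t => by rw [e_mul, inv_mul_cancel, e_one]
      right_inv := fun t => by rw [e_mul, mul_inv_cancel, e_one] }
  map_one' := Equiv.ext fun t => e_one n i t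
  map_mul' m m' := Equiv.ext fun t => (e_mul n i m m' t).symm

/-- The lifted homomorphism from the free product. -/
noncomputable def Φ (n : ℕ) : CoprodI G →* Equiv.Perm (T (G := G) n) :=
  lift (permHom n)

set_option linter.unusedSectionVars false in
theorem emptyT_mem (n : ℕ) : (empty : Word G).toList.length ≤ n + 1 := by simp

theorem key (n : ℕ) (w : Word G) (hw : w.toList.length ≤ n) :
    Φ n (prod w) ⟨empty, emptyT_mem n⟩ =
      ⟨w, Nat.le_succ_of_le hw⟩ := by
  induction w using consRecOn with
  | empty => simp [prod_empty, Φ]; rfl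
  | cons j m w' h1 h2 ih =>
    have hw' : w'.toList.length ≤ n := by
      rw [length_cons] at hw; omega
    rw [prod_cons, map_mul]
    refine (congrArg (Φ n (of m)) (ih hw')).trans ?_
    rw [Φ, lift_of]
    have hS : w' ∈ S (G := G) n j := ⟨Nat.le_succ_of_le hw', fun _ => hw'⟩
    have : permHom (G := G) n j m ⟨w', Nat.le_succ_of_le hw'⟩ =
        e n j m ⟨w', Nat.le_succ_of_le hw'⟩ := rfl
    rw [this]
    refine (e_apply_of_mem (t := ⟨w', Nat.le_succ_of_le hw'⟩) m hS).trans ?_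
    exact Subtype.ext (cons_eq_smul (h1 := h1) (h2 := h2)).symm

end CoprodIRF

/-- The free product `G₁ * G₂ * ⋯ * G_k` of a finite family of finite groups is
residually finite: every nontrivial element survives in some finite quotient. -/
theorem coprodI_finite_groups_residually_finite
    (k : ℕ) (G : Fin k → Type) [∀ i, Group (G i)] [∀ i, Finite (G i)]
    (g : Monoid.CoprodI G) (hg : g ≠ 1) :
    ∃ (Q : Type) (_ : Group Q) (_ : Finite Q) (φ : Monoid.CoprodI G →* Q), φ g ≠ 1 := by
  classical
  open Monoid.CoprodI Monoid.CoprodI.Word CoprodIRF in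
  · set w : Word G := Word.equiv g with hwdef
    have hgw : prod w = g := Word.equiv.symm_apply_apply g
    have hwne : w ≠ empty := by
      intro h
      apply hg
      rw [← hgw, h, prod_empty]
    set n : ℕ := w.toList.length with hn
    haveI : Finite (T (G := G) n) := by
      have hfin : ({l : List (Σ i, G i) | l.length ≤ n + 1}).Finite :=
        List.finite_length_le _ (n + 1)
      haveI := hfin.to_subtype
      refine Finite.of_injective
        (fun t : T (G := G) n =>
          (⟨t.1.toList, t.2⟩ : {l : List (Σ i, G i) | l.length ≤ n + 1})) ?_
      intro a b h
      apply Subtype.ext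
      apply Word.ext
      simpa using h
    refine ⟨Equiv.Perm (T (G := G) n), inferInstance, inferInstance, Φ n, ?_⟩
    intro hΦ
    have hk := key n w le_rfl
    rw [hgw, hΦ] at hk
    simp only [Equiv.Perm.coe_one, id_eq] at hk
    have hval : (empty : Word G) = w := congrArg Subtype.val hk
    exact hwne hval.symm
end
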